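/- Let P_n^{(L)}(η;z) be the orthonormal polynomials defined by P_{−1}^{(L)}=0, P_0^{(L)}=1 and z P_n^{(L)}(η;z) = w_{L+n} P_{n−1}^{(L)}(η;z) + λ_{L+n+1} P_n^{(L)}(η;z) + w_{L+n+1} P_{n+1}^{(L)}(η;z), where w_n = √((n+1)²+η²)/((n+1)√((2n+1)(2n+3))) and λ_n = −η/(n(n+1)). Then for all n, s ∈ ℤ_{≥0}: P_n^{(L−1)}(η;z) P_{n+s}^{(L)}(η;z) − P_{n+s+1}^{(L−1)}(η;z) P_{n−1}^{(L)}(η;z) = (w_L / w_{L+n}) P_s^{(L+n)}(η;z). -/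
import Mathlib


/-- w_x = √((x+1)² + η²) / ((x+1)√((2x+1)(2x+3))) (real index x). -/
noncomputable def wCoul (η x : ℝ) : ℝ :=
  Real.sqrt ((x + 1) ^ 2 + η ^ 2) / ((x + 1) * Real.sqrt ((2*x + 1) * (2*x + 3)))

/-- λ_x = -η/(x(x+1)) (real index x). -/
noncomputable def lamCoul (η x : ℝ) : ℝ := -η / (x * (x + 1))

/-- Abstract three-term-recurrence "associated polynomial" identity. -/
private lemma aux_rec (z : ℂ) (W Λ : ℕ → ℂ) (hW : ∀ k, W k ≠ 0)
    (u v q : ℕ → ℂ) (m : ℕ)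
    (hu1 : u 0 = 1) (hv1 : v 0 = 1) (hq1 : q 0 = 1)
    (hu : ∀ k, z * u (k+1) = W k * u k + Λ k * u (k+1) + W (k+1) * u (k+2))
    (hva : z * v 0 = Λ 0 * v 0 + W 1 * v 1)
    (hv : ∀ k, z * v (k+1) = W (k+1) * v k + Λ (k+1) * v (k+1) + W (k+2) * v (k+2))
    (hqa : z * q 0 = Λ (m+1) * q 0 + W (m+2) * q 1)
    (hq : ∀ s, z * q (s+1) = W (m+s+2) * q s + Λ (m+s+2) * q (s+1) + W (m+s+3) * q (s+2)) :
    ∀ s, W (m+1) * (u (m+1) * v (m+s+1) - u (m+s+2) * v m) = W 0 * q s := by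
  have wr : ∀ k, W (k+1) * (u (k+1) * v (k+1) - u (k+2) * v k) = W 0 := by
    intro k
    induction k with
    | zero =>
      linear_combination (-(u 1)) * hva + v 0 * hu 0 + (W 0 * v 0) * hu1 + W 0 * hv1
    | succ k ih =>
      linear_combination ih - u (k+2) * hv k + v (k+1) * hu (k+1)
  have main : ∀ s, (W (m+1) * (u (m+1) * v (m+s+1) - u (m+s+2) * v m) = W 0 * q s)
      ∧ (W (m+1) * (u (m+1) * v (m+s+2) - u (m+s+3) * v m) = W 0 * q (s+1)) := by
    intro s
    induction s with
    | zero =>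
      have k0 : W (m+1) * (u (m+1) * v (m+1) - u (m+2) * v m) = W 0 * q 0 := by
        linear_combination wr m - W 0 * hq1
      refine ⟨k0, ?_⟩
      apply mul_left_cancel₀ (hW (m+2))
      linear_combination (-(W (m+1) * u (m+1))) * hv m + (W (m+1) * v m) * hu (m+1)
        + (z - Λ (m+1)) * k0 + W 0 * hqa
    | succ s ih =>
      obtain ⟨ih1, ih2⟩ := ih
      refine ⟨ih2, ?_⟩
      show W (m+1) * (u (m+1) * v (m+s+3) - u (m+s+4) * v m) = W 0 * q (s+2)
      apply mul_left_cancel₀ (hW (m+s+3))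
      linear_combination (-(W (m+1) * u (m+1))) * hv (m+s+1) + (W (m+1) * v m) * hu (m+s+2)
        + (z - Λ (m+s+2)) * ih2 + W 0 * hq s + (-(W (m+s+2))) * ih1
  exact fun s => (main s).1

/-- For the family P^{(L')}_n of orthonormal polynomials generated, for each admissible
superscript L', by P^{(L')}_0 = 1 and
z P^{(L')}_n = w_{L'+n} P^{(L')}_{n-1} + λ_{L'+n+1} P^{(L')}_n + w_{L'+n+1} P^{(L')}_{n+1}
(with P^{(L')}_{-1} = 0), one has for all n, s ≥ 0:
P^{(L-1)}_n P^{(L)}_{n+s} - P^{(L-1)}_{n+s+1} P^{(L)}_{n-1} = (w_L/w_{L+n}) P^{(L+n)}_s. -/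
theorem stmt_15 (L η : ℝ) (hL : L > -(1/2)) (hL0 : L ≠ 0) (z : ℂ)
    (P : ℝ → ℕ → ℂ)
    (hP0 : ∀ L' : ℝ, (L' = L - 1 ∨ L' = L ∨ ∃ m : ℕ, L' = L + m) → P L' 0 = 1)
    (hrec : ∀ L' : ℝ, (L' = L - 1 ∨ L' = L ∨ ∃ m : ℕ, L' = L + m) → ∀ n : ℕ,
      z * P L' n = (if n = 0 then 0 else (wCoul η (L' + n) : ℂ) * P L' (n - 1)) +
        (lamCoul η (L' + n + 1) : ℂ) * P L' n + (wCoul η (L' + n + 1) : ℂ) * P L' (n + 1)) :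
    ∀ n s : ℕ,
      P (L - 1) n * P L (n + s) - P (L - 1) (n + s + 1) *
          (if n = 0 then 0 else P L (n - 1)) =
        ((wCoul η L / wCoul η (L + n) : ℝ) : ℂ) * P (L + n) s := by
  have hwpos : ∀ x : ℝ, -(1/2) < x → wCoul η x ≠ 0 := by
    intro x hx
    have h1 : (0:ℝ) < x + 1 := by linarith
    have h2 : (0:ℝ) < (2*x+1)*(2*x+3) := by nlinarith
    have h4 : (0:ℝ) < (x+1)^2 + η^2 := by nlinarith [sq_nonneg η, mul_pos h1 h1]
    have hpos := div_pos (Real.sqrt_pos.mpr h4) (mul_pos h1 (Real.sqrt_pos.mpr h2))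
    unfold wCoul
    exact ne_of_gt hpos
  have hwL : wCoul η L ≠ 0 := hwpos L hL
  have hcast : ∀ k : ℕ, ((wCoul η (L + k) : ℝ) : ℂ) ≠ 0 := by
    intro k
    simp only [ne_eq, Complex.ofReal_eq_zero]
    apply hwpos
    have : (0:ℝ) ≤ (k:ℝ) := Nat.cast_nonneg k
    linarith
  intro n s
  by_cases hn : n = 0
  · subst hn
    simp [hP0 (L-1) (Or.inl rfl), div_self hwL]
  · obtain ⟨m, rfl⟩ : ∃ m : ℕ, n = m + 1 := ⟨n - 1, by omega⟩
    rw [if_neg hn]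
    simp only [Nat.add_sub_cancel]
    have hu1 : P (L-1) 0 = 1 := hP0 (L-1) (Or.inl rfl)
    have hv1 : P L 0 = 1 := hP0 L (Or.inr (Or.inl rfl))
    have hq1 : P (L + ((m+1:ℕ):ℝ)) 0 = 1 := hP0 _ (Or.inr (Or.inr ⟨m+1, rfl⟩))
    have hu : ∀ k : ℕ, z * P (L-1) (k+1) =
        ((wCoul η (L + (k:ℕ)) : ℝ) : ℂ) * P (L-1) k +
        ((lamCoul η (L + ((k+1:ℕ):ℝ)) : ℝ) : ℂ) * P (L-1) (k+1) +
        ((wCoul η (L + ((k+1:ℕ):ℝ)) : ℝ) : ℂ) * P (L-1) (k+2) := by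
      intro k
      have h := hrec (L-1) (Or.inl rfl) (k+1)
      rw [if_neg (by omega : ¬(k+1 = 0)), Nat.add_sub_cancel] at h
      rw [show L - 1 + ((k+1 : ℕ) : ℝ) = L + (k:ℕ) by push_cast; ring] at h
      rw [show L + ((k:ℕ):ℝ) + 1 = L + ((k+1:ℕ):ℝ) by push_cast; ring] at h
      exact h
    have hva : z * P L 0 =
        ((lamCoul η (L + ((1:ℕ):ℝ)) : ℝ) : ℂ) * P L 0 +
        ((wCoul η (L + ((1:ℕ):ℝ)) : ℝ) : ℂ) * P L 1 := by
      have h := hrec L (Or.inr (Or.inl rfl)) 0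
      rw [if_pos rfl] at h
      rw [show L + ((0:ℕ):ℝ) + 1 = L + ((1:ℕ):ℝ) by push_cast; ring] at h
      linear_combination h
    have hv : ∀ k : ℕ, z * P L (k+1) =
        ((wCoul η (L + ((k+1:ℕ):ℝ)) : ℝ) : ℂ) * P L k +
        ((lamCoul η (L + ((k+2:ℕ):ℝ)) : ℝ) : ℂ) * P L (k+1) +
        ((wCoul η (L + ((k+2:ℕ):ℝ)) : ℝ) : ℂ) * P L (k+2) := by
      intro k
      have h := hrec L (Or.inr (Or.inl rfl)) (k+1)
      rw [if_neg (by omega : ¬(k+1 = 0)), Nat.add_sub_cancel] at h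
      rw [show L + ((k+1:ℕ):ℝ) + 1 = L + ((k+2:ℕ):ℝ) by push_cast; ring] at h
      exact h
    have hqa : z * P (L + ((m+1:ℕ):ℝ)) 0 =
        ((lamCoul η (L + ((m+2:ℕ):ℝ)) : ℝ) : ℂ) * P (L + ((m+1:ℕ):ℝ)) 0 +
        ((wCoul η (L + ((m+2:ℕ):ℝ)) : ℝ) : ℂ) * P (L + ((m+1:ℕ):ℝ)) 1 := by
      have h := hrec (L + ((m+1:ℕ):ℝ)) (Or.inr (Or.inr ⟨m+1, rfl⟩)) 0
      rw [if_pos rfl] at h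
      rw [show L + ((m+1:ℕ):ℝ) + ((0:ℕ):ℝ) + 1 = L + ((m+2:ℕ):ℝ) by push_cast; ring] at h
      linear_combination h
    have hq : ∀ t : ℕ, z * P (L + ((m+1:ℕ):ℝ)) (t+1) =
        ((wCoul η (L + ((m+t+2:ℕ):ℝ)) : ℝ) : ℂ) * P (L + ((m+1:ℕ):ℝ)) t +
        ((lamCoul η (L + ((m+t+3:ℕ):ℝ)) : ℝ) : ℂ) * P (L + ((m+1:ℕ):ℝ)) (t+1) +
        ((wCoul η (L + ((m+t+3:ℕ):ℝ)) : ℝ) : ℂ) * P (L + ((m+1:ℕ):ℝ)) (t+2) := by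
      intro t
      have h := hrec (L + ((m+1:ℕ):ℝ)) (Or.inr (Or.inr ⟨m+1, rfl⟩)) (t+1)
      rw [if_neg (by omega : ¬(t+1 = 0)), Nat.add_sub_cancel] at h
      rw [show L + ((m+1:ℕ):ℝ) + ((t+1:ℕ):ℝ) = L + ((m+t+2:ℕ):ℝ) by push_cast; ring] at h
      rw [show L + ((m+t+2:ℕ):ℝ) + 1 = L + ((m+t+3:ℕ):ℝ) by push_cast; ring] at h
      exact h
    have key := aux_rec z (fun k => ((wCoul η (L + (k:ℕ)) : ℝ) : ℂ))
      (fun k => ((lamCoul η (L + ((k+1:ℕ):ℝ)) : ℝ) : ℂ))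
      hcast (P (L-1)) (P L) (P (L + ((m+1:ℕ):ℝ))) m hu1 hv1 hq1 hu hva hv hqa hq s
    rw [show L + ((0:ℕ):ℝ) = L by push_cast; ring] at key
    rw [show m+1+s+1 = m+s+2 from by omega, show m+1+s = m+s+1 from by omega]
    rw [Complex.ofReal_div, div_mul_eq_mul_div, eq_div_iff (hcast (m+1))]
    linear_combination key
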